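/- Let c : ℝⁿ → ℝᵐ be continuously differentiable with Jacobian J, and let x ∈ ℝⁿ. Let s* be a global minimizer of s ↦ (1/2)‖s‖₂² + ‖c(x) + J(x)s‖₂, and define θ(x) := ‖c(x)‖₂ − ‖c(x) + J(x)s*‖₂ and θ_TR(x) := ‖c(x)‖₂ − min over s with ‖s‖₂ ≤ 1 of ‖c(x) + J(x)s‖₂. Then θ_TR(x) ≥ min(1/√2, θ(x)^{1/2})·θ(x)^{1/2}. -/

import Mathlib

/-! Moving from `0` towards the proximal step `s*` decreases `s ↦ ‖c + J s‖` at least linearly,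
by convexity, and comparing `s*` with `0` in the proximal objective gives `‖s*‖² ≤ 2θ`. So either
`s*` itself is trust-region feasible and achieves the decrease `θ`, or its rescaling `s*/‖s*‖`
achieves `θ/‖s*‖ ≥ θ^{1/2}/√2`. -/

section

variable {E F : Type*} [NormedAddCommGroup E] [NormedSpace ℝ E]
  [NormedAddCommGroup F] [NormedSpace ℝ F]

theorem norm_add_apply_smul_le (A : E →L[ℝ] F) (b : F) (s : E) {t : ℝ}
    (ht₀ : 0 ≤ t) (ht₁ : t ≤ 1) :
    ‖b + A (t • s)‖ ≤ ‖b‖ - t * (‖b‖ - ‖b + A s‖) := by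
  have hconv : b + A (t • s) = (1 - t) • b + t • (b + A s) := by
    rw [map_smul]; module
  calc ‖b + A (t • s)‖ ≤ ‖(1 - t) • b‖ + ‖t • (b + A s)‖ := hconv ▸ norm_add_le _ _
    _ = (1 - t) * ‖b‖ + t * ‖b + A s‖ := by
        rw [norm_smul, norm_smul, Real.norm_of_nonneg (by linarith), Real.norm_of_nonneg ht₀]
    _ = ‖b‖ - t * (‖b‖ - ‖b + A s‖) := by ring

theorem norm_sq_le_of_forall_proximal_le (A : E →L[ℝ] F) (b : F) {s₀ : E}
    (hs₀ : ∀ s : E, 1 / 2 * ‖s₀‖ ^ 2 + ‖b + A s₀‖ ≤ 1 / 2 * ‖s‖ ^ 2 + ‖b + A s‖) :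
    ‖s₀‖ ^ 2 ≤ 2 * (‖b‖ - ‖b + A s₀‖) := by
  have h := hs₀ 0
  rw [map_zero, add_zero, norm_zero] at h
  linarith

theorem sInf_norm_add_apply_le (A : E →L[ℝ] F) (b : F) {s : E} (hs : ‖s‖ ≤ 1) :
    sInf ((fun s => ‖b + A s‖) '' {s : E | ‖s‖ ≤ 1}) ≤ ‖b + A s‖ :=
  csInf_le ⟨0, by rintro _ ⟨_, _, rfl⟩; positivity⟩ ⟨s, hs, rfl⟩

end

theorem exists_step_min_inv_sqrt_two_le {r θ : ℝ} (hrθ : r ^ 2 ≤ 2 * θ) :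
    ∃ t : ℝ, 0 ≤ t ∧ t ≤ 1 ∧ t * r ≤ 1 ∧
      min (1 / Real.sqrt 2) (Real.sqrt θ) * Real.sqrt θ ≤ t * θ := by
  have hθ : 0 ≤ θ := by nlinarith
  have hsqrtθ : Real.sqrt θ * Real.sqrt θ = θ := Real.mul_self_sqrt hθ
  rcases le_or_gt r 1 with hr₁ | hr₁
  · refine ⟨1, zero_le_one, le_rfl, by linarith, ?_⟩
    calc min (1 / Real.sqrt 2) (Real.sqrt θ) * Real.sqrt θ
        ≤ Real.sqrt θ * Real.sqrt θ := by gcongr; exact min_le_right _ _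
      _ = 1 * θ := by rw [hsqrtθ, one_mul]
  · have hr₀ : 0 < r := by linarith
    have hsqrt2 : 0 < Real.sqrt 2 := by positivity
    have hr_le : r ≤ Real.sqrt 2 * Real.sqrt θ := by
      rw [← Real.sqrt_mul zero_le_two]
      exact Real.le_sqrt_of_sq_le hrθ
    refine ⟨1 / r, by positivity, by rw [div_le_one hr₀]; linarith,
      by rw [one_div_mul_cancel hr₀.ne'], ?_⟩
    calc min (1 / Real.sqrt 2) (Real.sqrt θ) * Real.sqrt θ
        ≤ 1 / Real.sqrt 2 * Real.sqrt θ := by gcongr; exact min_le_left _ _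
      _ ≤ 1 / r * θ := by
        rw [div_mul_eq_mul_div, div_mul_eq_mul_div, one_mul, one_mul,
          div_le_div_iff₀ hsqrt2 hr₀]
        nlinarith [Real.sqrt_nonneg θ]

theorem stmt_6 {n m : ℕ}
    (c : EuclideanSpace ℝ (Fin n) → EuclideanSpace ℝ (Fin m))
    (x : EuclideanSpace ℝ (Fin n))
    (sstar : EuclideanSpace ℝ (Fin n))
    (hsstar : ∀ s : EuclideanSpace ℝ (Fin n),
      1 / 2 * ‖sstar‖ ^ 2 + ‖c x + fderiv ℝ c x sstar‖
        ≤ 1 / 2 * ‖s‖ ^ 2 + ‖c x + fderiv ℝ c x s‖) :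
    ‖c x‖ - sInf ((fun s => ‖c x + fderiv ℝ c x s‖) '' {s : EuclideanSpace ℝ (Fin n) | ‖s‖ ≤ 1})
      ≥ min (1 / Real.sqrt 2) (Real.sqrt (‖c x‖ - ‖c x + fderiv ℝ c x sstar‖)) *
          Real.sqrt (‖c x‖ - ‖c x + fderiv ℝ c x sstar‖) := by
  obtain ⟨t, ht₀, ht₁, htr, hdecrease⟩ := exists_step_min_inv_sqrt_two_le
    (norm_sq_le_of_forall_proximal_le (fderiv ℝ c x) (c x) hsstar)
  have hfeasible : ‖t • sstar‖ ≤ 1 := by rwa [norm_smul, Real.norm_of_nonneg ht₀]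
  have := (sInf_norm_add_apply_le (fderiv ℝ c x) (c x) hfeasible).trans
    (norm_add_apply_smul_le (fderiv ℝ c x) (c x) sstar ht₀ ht₁)
  linarith
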